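/- At w = 1, the rewarding rules (x, y, z) = (2/3, 1, 1/3) and (x, y, z) = (0, 1/3, 1) yield the same value of obj(x,y,z) = c̄(1 + z − y) + y, where c̄ = x + z²/2 − y²/2, and both are optimal among rewarding rules with x + z = 1 and 0 ≤ x, y, z ≤ 1. -/
import Mathlib

noncomputable def cbar (x y z : ℝ) : ℝ := x + z ^ 2 / 2 - y ^ 2 / 2

noncomputable def obj (x y z : ℝ) : ℝ := cbar x y z * (1 + z - y) + y

lemma key (x y z : ℝ) (hxz : x + z = 1) (hy0 : 0 ≤ y) (hy1 : y ≤ 1)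
    (hz0 : 0 ≤ z) (hz1 : z ≤ 1) : obj x y z ≤ 29/27 := by
  have hx : x = 1 - z := by linarith
  subst hx
  unfold obj cbar
  rcases le_or_gt (y + z) 1 with h | h
  · nlinarith [mul_nonneg (sq_nonneg (y - z)) (by linarith : (0:ℝ) ≤ 1 - (y + z))]
  · nlinarith [mul_nonneg (sq_nonneg (y + z - 4/3)) (by linarith : (0:ℝ) ≤ 7/3 - (y + z)),
      mul_nonneg (mul_nonneg (by linarith : (0:ℝ) ≤ 1 - y) (by linarith : (0:ℝ) ≤ 1 - z))
        (by linarith : (0:ℝ) ≤ y + z - 1)]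

/-- At `w = 1`, the rewarding rules `(2/3, 1, 1/3)` and `(0, 1/3, 1)` yield
the same value of `obj`, and both are optimal among rules with `x + z = 1`,
`0 ≤ x, y, z ≤ 1`. -/
theorem stmt_6 :
    obj (2/3) 1 (1/3) = obj 0 (1/3) 1 ∧
    (∀ x y z : ℝ, x + z = 1 → 0 ≤ x → x ≤ 1 → 0 ≤ y → y ≤ 1 → 0 ≤ z → z ≤ 1 →
      obj x y z ≤ obj (2/3) 1 (1/3)) ∧
    (∀ x y z : ℝ, x + z = 1 → 0 ≤ x → x ≤ 1 → 0 ≤ y → y ≤ 1 → 0 ≤ z → z ≤ 1 →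
      obj x y z ≤ obj 0 (1/3) 1) := by
  have h1 : obj (2/3) 1 (1/3) = 29/27 := by unfold obj cbar; norm_num
  have h2 : obj 0 (1/3) 1 = 29/27 := by unfold obj cbar; norm_num
  refine ⟨by rw [h1, h2], fun x y z hxz _ _ hy0 hy1 hz0 hz1 => ?_,
    fun x y z hxz _ _ hy0 hy1 hz0 hz1 => ?_⟩
  · rw [h1]; exact key x y z hxz hy0 hy1 hz0 hz1
  · rw [h2]; exact key x y z hxz hy0 hy1 hz0 hz1
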